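/- In the 3-state MDP example, the Markovian greedy CVaR policy is strictly suboptimal for the trajectory CVaR objective: with β = CVaR_{0.1}, the policy taking a₁ at s₁ (per-state greedy tie-break possibility) combined with a₀ at s₀ yields trajectory return distribution {95 w.p. 0.9, −15 w.p. 0.1} with β-value −15, and the policy (a₁ at s₀) yields constant −10; whereas the history-independent-looking policy taking a₀ at both states yields {200 w.p. 0.81, 90 w.p. 0.18, −20 w.p. 0.01} with β-value 7.9 > −10 > −15. Hence the CVaR of the trajectory return of the policy maximizing per-state CVaR is strictly less than the optimal trajectory CVaR. -/

import Mathlib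

open MeasureTheory

/-- Quantile function of a distribution `μ` on ℝ. -/
noncomputable def qf (μ : Measure ℝ) (τ : ℝ) : ℝ :=
  sInf {x : ℝ | τ ≤ (μ (Set.Iic x)).toReal}

/-- Lower-tail conditional value-at-risk `CVaR_η[X] = (1/η) ∫₀^η F_X^{-1}`. -/
noncomputable def cvar (η : ℝ) (μ : Measure ℝ) : ℝ :=
  (1 / η) * ∫ τ in Set.Ioo (0:ℝ) η, qf μ τ

/-!
The quantile function of a finitely supported distribution is a step function: on `(0, η)` it
equals the lowest atom for `τ` up to that atom's weight, then the next atom, and so on.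
So each CVaR below is an average of at most two atoms. The greedy choice at `s₁` avoids the
`−10` tail of `a₀` at the cost of a sure `−5`, but along the trajectory `(a₀, a₀)` the bad
outcome `−20` has probability only `0.01`, so the worst 10% of returns mostly sit at `90` and
`CVaR₀.₁ = (0.01 · (−20) + 0.09 · 90) / 0.1 = 79`, far above the `−10` and `−15` of the
policies taking `a₁` at `s₁`.
-/

open Set ENNReal

namespace MeasureTheory.Measure

variable {α : Type*} [MeasurableSpace α]

lemma toReal_smul_dirac_Iic (w : ℝ≥0∞) (c x : ℝ) :
    ((w • dirac c) (Iic x)).toReal = if c ≤ x then w.toReal else 0 := by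
  simp only [smul_apply, dirac_apply' _ measurableSet_Iic, indicator_apply, mem_Iic,
    Pi.one_apply, smul_eq_mul]
  split_ifs <;> simp

lemma smul_dirac_apply_ne_top {w : ℝ≥0∞} (hw : w ≠ ∞) (c : α) (s : Set α) :
    (w • dirac c) s ≠ ∞ := by
  rw [smul_apply, smul_eq_mul]
  exact mul_ne_top hw (measure_ne_top _ _)

lemma toReal_add_apply {μ ν : Measure α} {s : Set α} (hμ : μ s ≠ ∞) (hν : ν s ≠ ∞) :
    ((μ + ν) s).toReal = (μ s).toReal + (ν s).toReal := by
  rw [add_apply, ENNReal.toReal_add hμ hν]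

end MeasureTheory.Measure

open Measure

lemma qf_eq_of_forall_le_iff {μ : Measure ℝ} {τ a : ℝ}
    (h : ∀ x, τ ≤ (μ (Iic x)).toReal ↔ a ≤ x) : qf μ τ = a := by
  rw [qf, show {x | τ ≤ (μ (Iic x)).toReal} = Ici a from Set.ext h, csInf_Ici]

lemma qf_dirac {c τ : ℝ} (h0 : 0 < τ) (h1 : τ ≤ 1) : qf (dirac c) τ = c := by
  refine qf_eq_of_forall_le_iff fun x => ?_
  rw [← one_smul ℝ≥0∞ (dirac c), toReal_smul_dirac_Iic, toReal_one]
  split_ifs <;> constructor <;> intro <;> linarith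

lemma qf_two_atoms {p q : ℝ≥0∞} {c d τ : ℝ} (hdc : d < c) (h0 : 0 < τ) (h1 : τ ≤ q.toReal)
    (hp : p ≠ ∞ := by finiteness) (hq : q ≠ ∞ := by finiteness) :
    qf (p • dirac c + q • dirac d) τ = d := by
  refine qf_eq_of_forall_le_iff fun x => ?_
  rw [toReal_add_apply (smul_dirac_apply_ne_top hp _ _) (smul_dirac_apply_ne_top hq _ _),
    toReal_smul_dirac_Iic, toReal_smul_dirac_Iic]
  have := p.toReal_nonneg
  split_ifs <;> constructor <;> intro <;> linarith

section ThreeAtoms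

variable {p q r : ℝ≥0∞} {c d e x : ℝ}

lemma toReal_three_atoms_Iic (hp : p ≠ ∞) (hq : q ≠ ∞) (hr : r ≠ ∞) :
    ((p • dirac c + q • dirac d + r • dirac e) (Iic x)).toReal =
      (if c ≤ x then p.toReal else 0) + (if d ≤ x then q.toReal else 0) +
        (if e ≤ x then r.toReal else 0) := by
  rw [toReal_add_apply (add_ne_top.mpr ⟨smul_dirac_apply_ne_top hp _ _,
      smul_dirac_apply_ne_top hq _ _⟩) (smul_dirac_apply_ne_top hr _ _),
    toReal_add_apply (smul_dirac_apply_ne_top hp _ _) (smul_dirac_apply_ne_top hq _ _),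
    toReal_smul_dirac_Iic, toReal_smul_dirac_Iic, toReal_smul_dirac_Iic]

lemma qf_three_atoms_of_le {τ : ℝ} (hed : e < d) (hdc : d < c) (h0 : 0 < τ) (h1 : τ ≤ r.toReal)
    (hp : p ≠ ∞ := by finiteness) (hq : q ≠ ∞ := by finiteness) (hr : r ≠ ∞ := by finiteness) :
    qf (p • dirac c + q • dirac d + r • dirac e) τ = e := by
  refine qf_eq_of_forall_le_iff fun x => ?_
  rw [toReal_three_atoms_Iic hp hq hr]
  have := p.toReal_nonneg
  have := q.toReal_nonneg
  split_ifs <;> constructor <;> intro <;> linarith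

lemma qf_three_atoms_of_lt_of_le {τ : ℝ} (hed : e < d) (hdc : d < c) (h0 : r.toReal < τ)
    (h1 : τ ≤ r.toReal + q.toReal)
    (hp : p ≠ ∞ := by finiteness) (hq : q ≠ ∞ := by finiteness) (hr : r ≠ ∞ := by finiteness) :
    qf (p • dirac c + q • dirac d + r • dirac e) τ = d := by
  refine qf_eq_of_forall_le_iff fun x => ?_
  rw [toReal_three_atoms_Iic hp hq hr]
  have := p.toReal_nonneg
  have := r.toReal_nonneg
  split_ifs <;> constructor <;> intro <;> linarith

end ThreeAtoms

lemma cvar_eq_of_eqOn {μ : Measure ℝ} {η a : ℝ} (hη : 0 < η)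
    (h : EqOn (qf μ) (fun _ => a) (Ioo 0 η)) : cvar η μ = a := by
  rw [cvar, setIntegral_congr_fun measurableSet_Ioo h, setIntegral_const, measureReal_def,
    Real.volume_Ioo, toReal_ofReal (by linarith), smul_eq_mul]
  field_simp
  ring

lemma cvar_eq_of_eqOn_Ioc_of_eqOn_Ioo {μ : Measure ℝ} {η p a b : ℝ} (hp : 0 < p) (hpη : p < η)
    (ha : EqOn (qf μ) (fun _ => a) (Ioc 0 p)) (hb : EqOn (qf μ) (fun _ => b) (Ioo p η)) :
    cvar η μ = (p * a + (η - p) * b) / η := by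
  have hdisj : Disjoint (Ioc 0 p) (Ioo p η) :=
    disjoint_left.mpr fun _ h h' => (h.2.trans_lt h'.1).false
  have hia : IntegrableOn (qf μ) (Ioc 0 p) :=
    (integrableOn_const measure_Ioc_lt_top.ne).congr_fun ha.symm measurableSet_Ioc
  have hib : IntegrableOn (qf μ) (Ioo p η) :=
    (integrableOn_const measure_Ioo_lt_top.ne).congr_fun hb.symm measurableSet_Ioo
  rw [cvar, ← Ioc_union_Ioo_eq_Ioo hp.le hpη, setIntegral_union hdisj measurableSet_Ioo hia hib,
    setIntegral_congr_fun measurableSet_Ioc ha, setIntegral_congr_fun measurableSet_Ioo hb,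
    setIntegral_const, setIntegral_const, measureReal_def, measureReal_def, Real.volume_Ioc,
    Real.volume_Ioo, toReal_ofReal (by linarith), toReal_ofReal (by linarith)]
  simp only [smul_eq_mul]
  ring

/-- in the undiscounted two-step 3-state MDP, the Markovian greedy CVaR
policy is strictly suboptimal for the trajectory CVaR objective (β = CVaR₀.₁).
At `s₁`: `CVaR[R(s₁,a₀)] = −10 < −5 = CVaR[R(s₁,a₁)]`, so the per-state greedy policy
takes `a₁` at `s₁`.  Trajectory return distributions: `(a₀,a₁)` gives
`{95 w.p. 0.9; −15 w.p. 0.1}` with β-value `−15`; `(a₁,a₁)` gives the constant `−10`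
with β-value `−10`; `(a₀,a₀)` gives `{200 w.p. 0.81; 90 w.p. 0.18; −20 w.p. 0.01}`
whose β-value (the mean of the worst 10% tail, `(0.01·(−20)+0.09·90)/0.1`) exceeds
`−10 > −15`.  Hence the trajectory CVaR of any per-state-greedy policy (at most `−10`)
is strictly less than the optimal trajectory CVaR, achieved by `(a₀,a₀)`. -/
theorem greedy_cvar_policy_strictly_suboptimal :
    let d00 : Measure ℝ := (81/100 : ENNReal) • Measure.dirac 200 +
      (18/100 : ENNReal) • Measure.dirac 90 + (1/100 : ENNReal) • Measure.dirac (-20)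
    let d01 : Measure ℝ :=
      (9/10 : ENNReal) • Measure.dirac 95 + (1/10 : ENNReal) • Measure.dirac (-15)
    let d11 : Measure ℝ := Measure.dirac (-10)
    let Rs₁a₀ : Measure ℝ :=
      (9/10 : ENNReal) • Measure.dirac 100 + (1/10 : ENNReal) • Measure.dirac (-10)
    let Rs₁a₁ : Measure ℝ := Measure.dirac (-5)
    -- the per-state greedy choice at s₁ is a₁:
    cvar (1/10) Rs₁a₀ < cvar (1/10) Rs₁a₁ ∧
    -- trajectory β-values of the two policies compatible with that greedy choice:
    cvar (1/10) d01 = -15 ∧ cvar (1/10) d11 = -10 ∧ (-15:ℝ) < -10 ∧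
    -- the policy (a₀,a₀) strictly beats both:
    (-10:ℝ) < cvar (1/10) d00 ∧
    max (cvar (1/10) d01) (cvar (1/10) d11) < cvar (1/10) d00 := by
  intro d00 d01 d11 Rs₁a₀ Rs₁a₁
  have h00 : cvar (1/10) d00 = 79 := by
    rw [cvar_eq_of_eqOn_Ioc_of_eqOn_Ioo (p := 1/100) (a := -20) (b := 90)
      (by norm_num) (by norm_num)
      (fun τ hτ => qf_three_atoms_of_le (by norm_num) (by norm_num) hτ.1 (by simpa using hτ.2))
      (fun τ hτ => qf_three_atoms_of_lt_of_le (by norm_num) (by norm_num) (by simpa using hτ.1)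
        (by norm_num; linarith [hτ.2]))]
    norm_num
  have h01 : cvar (1/10) d01 = -15 := cvar_eq_of_eqOn (by norm_num) fun τ hτ =>
    qf_two_atoms (by norm_num) hτ.1 (by simpa using hτ.2.le)
  have h11 : cvar (1/10) d11 = -10 := cvar_eq_of_eqOn (by norm_num) fun τ hτ =>
    qf_dirac hτ.1 (by linarith [hτ.2])
  have ha₀ : cvar (1/10) Rs₁a₀ = -10 := cvar_eq_of_eqOn (by norm_num) fun τ hτ =>
    qf_two_atoms (by norm_num) hτ.1 (by simpa using hτ.2.le)
  have ha₁ : cvar (1/10) Rs₁a₁ = -5 := cvar_eq_of_eqOn (by norm_num) fun τ hτ =>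
    qf_dirac hτ.1 (by linarith [hτ.2])
  rw [h00, h01, h11, ha₀, ha₁]
  norm_num
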